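/- Let Ω be second countable, (T(t))_{t≥0} a positive strong Feller semigroup on B_b(Ω), and μ a strictly positive, finite, invariant Borel measure. Suppose that for every x ∈ Ω and t > 0 there exists a finite positive Borel measure μ_{t,x} with (T(t)f)(x) = ∫ f dμ_{t,x} for all f ∈ B_b(Ω). Then each μ_{t,x} is absolutely continuous with respect to μ, i.e., there exists k_{t,x} ∈ L¹(Ω,μ) with (T(t)f)(x) = ∫ k_{t,x} f dμ for all f ∈ B_b(Ω). -/

import Mathlib

open MeasureTheory Filter Topology Set

/-- `Bb f`: `f` is a bounded Borel measurable real-valued function. -/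
def Bb {Ω : Type*} [MeasurableSpace Ω] (f : Ω → ℝ) : Prop :=
  Measurable f ∧ ∃ C : ℝ, ∀ x, |f x| ≤ C

/-! If `μ A = 0`, invariance and positivity make `T t 𝟙_A` a nonnegative function of
`μ`-integral zero, hence zero `μ`-a.e.; it is continuous by the strong Feller property, and since
`μ` charges every nonempty open set it vanishes everywhere. So every representing measure
`μ_{t,x}` annihilates `A`, and `k_{t,x}` is the Radon–Nikodym derivative `dμ_{t,x}/dμ`. -/

section

variable {Ω : Type*} [MeasurableSpace Ω]

theorem Bb.integrable {f : Ω → ℝ} (hf : Bb f) (μ : Measure Ω) [IsFiniteMeasure μ] :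
    Integrable f μ := by
  obtain ⟨hmeas, C, hC⟩ := hf
  exact .of_bound hmeas.aestronglyMeasurable C (ae_of_all _ hC)

theorem Bb.indicator_one {A : Set Ω} (hA : MeasurableSet A) : Bb (A.indicator (1 : Ω → ℝ)) :=
  ⟨measurable_one.indicator hA, 1, fun y => by by_cases hy : y ∈ A <;> simp [hy]⟩

theorem eq_zero_of_integral_eq_zero_of_continuous [TopologicalSpace Ω] {μ : Measure Ω}
    (hμpos : ∀ U : Set Ω, IsOpen U → U.Nonempty → 0 < μ U)
    {g : Ω → ℝ} (hg : Integrable g μ) (hg_cont : Continuous g) (hg_nonneg : ∀ x, 0 ≤ g x)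
    (hg_int : ∫ x, g x ∂μ = 0) : g = 0 := by
  have : μ.IsOpenPosMeasure := ⟨fun U hU hne => (hμpos U hU hne).ne'⟩
  have hg_ae : g =ᵐ[μ] 0 := (integral_eq_zero_iff_of_nonneg hg_nonneg hg).mp hg_int
  exact (hg_cont.ae_eq_iff_eq μ continuous_zero).mp hg_ae

section StrongFeller

variable [TopologicalSpace Ω] {μ : Measure Ω} [IsFiniteMeasure μ]
  {S : (Ω → ℝ) → (Ω → ℝ)}

theorem apply_indicator_one_eq_zero_of_measure_eq_zero
    (hμpos : ∀ U : Set Ω, IsOpen U → U.Nonempty → 0 < μ U)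
    (hS_Bb : ∀ f, Bb f → Bb (S f)) (hS_pos : ∀ f, Bb f → (∀ x, 0 ≤ f x) → ∀ x, 0 ≤ S f x)
    (hS_cont : ∀ f, Bb f → Continuous (S f)) (hS_inv : ∀ f, Bb f → ∫ x, S f x ∂μ = ∫ x, f x ∂μ)
    {A : Set Ω} (hA : MeasurableSet A) (hA0 : μ A = 0) :
    S (A.indicator 1) = 0 := by
  have h1A := Bb.indicator_one hA
  refine eq_zero_of_integral_eq_zero_of_continuous hμpos ((hS_Bb _ h1A).integrable μ)
    (hS_cont _ h1A) (hS_pos _ h1A fun y => indicator_nonneg (fun _ _ => zero_le_one) y) ?_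
  rw [hS_inv _ h1A, integral_indicator_one hA, measureReal_def, hA0, ENNReal.toReal_zero]

theorem absolutelyContinuous_of_represents
    (hμpos : ∀ U : Set Ω, IsOpen U → U.Nonempty → 0 < μ U)
    (hS_Bb : ∀ f, Bb f → Bb (S f)) (hS_pos : ∀ f, Bb f → (∀ x, 0 ≤ f x) → ∀ x, 0 ≤ S f x)
    (hS_cont : ∀ f, Bb f → Continuous (S f)) (hS_inv : ∀ f, Bb f → ∫ x, S f x ∂μ = ∫ x, f x ∂μ)
    {x : Ω} {ν : Measure Ω} [IsFiniteMeasure ν] (hν : ∀ f, Bb f → S f x = ∫ y, f y ∂ν) :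
    ν ≪ μ := by
  refine Measure.AbsolutelyContinuous.mk fun A hA hA0 => ?_
  have hνA : ν.real A = 0 := by
    rw [← integral_indicator_one hA, ← hν _ (Bb.indicator_one hA),
      apply_indicator_one_eq_zero_of_measure_eq_zero hμpos hS_Bb hS_pos hS_cont hS_inv hA hA0,
      Pi.zero_apply]
  exact (measureReal_eq_zero_iff).mp hνA

end StrongFeller

end

theorem stmt_7_general {Ω : Type*} [TopologicalSpace Ω]
    [MeasurableSpace Ω]
    (μ : Measure Ω) [IsFiniteMeasure μ]
    (hμpos : ∀ U : Set Ω, IsOpen U → U.Nonempty → 0 < μ U)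
    (T : ℝ → (Ω → ℝ) → (Ω → ℝ))
    (hTBb : ∀ t, 0 ≤ t → ∀ f, Bb f → Bb (T t f))
    (hpos : ∀ t, 0 ≤ t → ∀ f, Bb f → (∀ x, 0 ≤ f x) → ∀ x, 0 ≤ T t f x)
    (hSF : ∀ t, 0 < t → ∀ f, Bb f → Continuous (T t f))
    (hinv : ∀ t, 0 ≤ t → ∀ f, Bb f → ∫ x, T t f x ∂μ = ∫ x, f x ∂μ) :
    ∀ t, 0 < t → ∀ x : Ω, ∀ ν : Measure Ω, IsFiniteMeasure ν →
      (∀ f, Bb f → T t f x = ∫ y, f y ∂ν) →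
      ν ≪ μ ∧ ∃ k : Ω → ℝ, Integrable k μ ∧
        ∀ f, Bb f → T t f x = ∫ y, k y * f y ∂μ := by
  intro t ht x ν _ hν
  have hac : ν ≪ μ := absolutelyContinuous_of_represents hμpos (hTBb t ht.le) (hpos t ht.le)
    (hSF t ht) (hinv t ht.le) hν
  refine ⟨hac, fun y => (ν.rnDeriv μ y).toReal, Measure.integrable_toReal_rnDeriv, fun f hf => ?_⟩
  rw [hν f hf, ← integral_rnDeriv_smul hac]
  rfl

theorem stmt_7 {Ω : Type*} [TopologicalSpace Ω] [T2Space Ω] [SecondCountableTopology Ω]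
    [MeasurableSpace Ω] [BorelSpace Ω]
    (μ : Measure Ω) [IsFiniteMeasure μ]
    (hμpos : ∀ U : Set Ω, IsOpen U → U.Nonempty → 0 < μ U)
    (T : ℝ → (Ω → ℝ) → (Ω → ℝ))
    (hTBb : ∀ t, 0 ≤ t → ∀ f, Bb f → Bb (T t f))
    (hadd : ∀ t, 0 ≤ t → ∀ f g, Bb f → Bb g → T t (f + g) = T t f + T t g)
    (hsmul : ∀ t, 0 ≤ t → ∀ (c : ℝ) (f), Bb f → T t (c • f) = c • T t f)
    (hpos : ∀ t, 0 ≤ t → ∀ f, Bb f → (∀ x, 0 ≤ f x) → ∀ x, 0 ≤ T t f x)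
    (hT0 : ∀ f, Bb f → T 0 f = f)
    (hsg : ∀ s t : ℝ, 0 ≤ s → 0 ≤ t → ∀ f, Bb f → T (s + t) f = T s (T t f))
    (hSF : ∀ t, 0 < t → ∀ f, Bb f → Continuous (T t f))
    (hinv : ∀ t, 0 ≤ t → ∀ f, Bb f → ∫ x, T t f x ∂μ = ∫ x, f x ∂μ)
    (hmeas : ∀ t, 0 < t → ∀ x : Ω, ∃ ν : Measure Ω, IsFiniteMeasure ν ∧
      ∀ f, Bb f → T t f x = ∫ y, f y ∂ν) :
    ∀ t, 0 < t → ∀ x : Ω, ∀ ν : Measure Ω, IsFiniteMeasure ν →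
      (∀ f, Bb f → T t f x = ∫ y, f y ∂ν) →
      ν ≪ μ ∧ ∃ k : Ω → ℝ, Integrable k μ ∧
        ∀ f, Bb f → T t f x = ∫ y, k y * f y ∂μ :=
  stmt_7_general μ hμpos T hTBb hpos hSF hinv
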